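/- Let f, g be germs at 0 ∈ ℂ² of analytic functions vanishing at the origin, let u', u'' be germs of analytic functions vanishing at the origin, and set f̃ = (1+u')·f, g̃ = (1+u'')·g. Assume f and g are coprime. Then for every pair of coprime positive integers k, l and every t₀ ∈ ℂ: t₀ is an asymptotic critical value of g^k/f^l at the origin if and only if t₀ is an asymptotic critical value of g̃^k/f̃^l at the origin. -/
import Mathlib


noncomputable section

/-- `t₀` is an asymptotic critical value of the meromorphic function `f/g` at
the origin of `ℂ²` if there is a sequence of points `z k ≠ 0` tending to `0`,
with `g (z k) ≠ 0`, such that `‖z k‖·‖∇(f/g)(z k)‖ → 0` and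
`f (z k) / g (z k) → t₀`. -/
def AsymptoticCriticalValue (f g : ℂ × ℂ → ℂ) (t₀ : ℂ) : Prop :=
  ∃ z : ℕ → ℂ × ℂ,
    Filter.Tendsto z Filter.atTop (nhds 0) ∧
    (∀ n, z n ≠ 0) ∧ (∀ n, g (z n) ≠ 0) ∧
    Filter.Tendsto (fun n => ‖z n‖ * ‖fderiv ℂ (fun w => f w / g w) (z n)‖)
      Filter.atTop (nhds 0) ∧
    Filter.Tendsto (fun n => f (z n) / g (z n)) Filter.atTop (nhds t₀)

/-- The Taylor series at the origin of a function `f : ℂ × ℂ → ℂ`, as a formal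
power series in `ℂ[[x,y]]`: its coefficient at `x^p y^q` is
`(∂^{p+q} f/∂x^p ∂y^q)(0) / (p! q!)`. -/
def taylorSeries (f : ℂ × ℂ → ℂ) : MvPowerSeries (Fin 2) ℂ :=
  fun d =>
    (iteratedFDeriv ℂ (d 0 + d 1) f 0
        (fun i => if (i : ℕ) < d 0 then ((1 : ℂ), (0 : ℂ)) else ((0 : ℂ), (1 : ℂ))))
      / (((d 0).factorial : ℂ) * ((d 1).factorial : ℂ))

open Filter Topology

lemma diffDiv {A B : ℂ × ℂ → ℂ} {w : ℂ × ℂ} (hA : DifferentiableAt ℂ A w)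
    (hB : DifferentiableAt ℂ B w) (h : B w ≠ 0) :
    DifferentiableAt ℂ (fun x => A x / B x) w := by
  simp only [div_eq_mul_inv]
  exact hA.mul (hB.inv h)

lemma transfer (A B A' B' h : ℂ × ℂ → ℂ) (U : Set (ℂ × ℂ))
    (hU : IsOpen U) (h0U : (0 : ℂ × ℂ) ∈ U)
    (hdA : ∀ w ∈ U, DifferentiableAt ℂ A w)
    (hdB : ∀ w ∈ U, DifferentiableAt ℂ B w)
    (hdh : ∀ w ∈ U, DifferentiableAt ℂ h w)
    (heq : ∀ w ∈ U, B w ≠ 0 → B' w ≠ 0 ∧ A' w / B' w = (A w / B w) * h w)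
    (hh0 : h 0 = 1)
    (hfd : ContinuousAt (fderiv ℂ h) 0)
    (t₀ : ℂ) (H : AsymptoticCriticalValue A B t₀) :
    AsymptoticCriticalValue A' B' t₀ := by
  obtain ⟨z, hz0, hzne, hzB, hzd, hzt⟩ := H
  obtain ⟨N, hN⟩ := eventually_atTop.1 (hz0.eventually (hU.eventually_mem h0U))
  set z' : ℕ → ℂ × ℂ := fun n => z (n + N) with hz'
  have hmem : ∀ n, z' n ∈ U := fun n => hN _ (Nat.le_add_left N n)
  have hz'0 : Tendsto z' atTop (𝓝 0) := hz0.comp (tendsto_add_atTop_nat N)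
  have hz'B : ∀ n, B (z' n) ≠ 0 := fun n => hzB (n + N)
  have hz'd : Tendsto (fun n => ‖z' n‖ * ‖fderiv ℂ (fun w => A w / B w) (z' n)‖)
      atTop (𝓝 0) := hzd.comp (tendsto_add_atTop_nat N)
  have hz't : Tendsto (fun n => A (z' n) / B (z' n)) atTop (𝓝 t₀) :=
    hzt.comp (tendsto_add_atTop_nat N)
  -- key fderiv identity
  have key : ∀ n, fderiv ℂ (fun w => A' w / B' w) (z' n)
      = (A (z' n) / B (z' n)) • fderiv ℂ h (z' n)
        + h (z' n) • fderiv ℂ (fun w => A w / B w) (z' n) := by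
    intro n
    have hw : z' n ∈ U := hmem n
    have hev : (fun w => A' w / B' w) =ᶠ[𝓝 (z' n)] fun w => (A w / B w) * h w := by
      filter_upwards [hU.eventually_mem hw,
        (hdB _ hw).continuousAt.eventually_ne (hz'B n)] with x hx1 hx2
      exact (heq x hx1 hx2).2
    rw [hev.fderiv_eq]
    have hdiv : DifferentiableAt ℂ (fun w => A w / B w) (z' n) :=
      diffDiv (hdA _ hw) (hdB _ hw) (hz'B n)
    exact fderiv_mul hdiv (hdh _ hw)
  -- continuity facts
  have hhc : Tendsto (fun n => h (z' n)) atTop (𝓝 1) := by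
    have := ((hdh 0 h0U).continuousAt.tendsto).comp hz'0
    rwa [hh0] at this
  have hfdc : Tendsto (fun n => ‖fderiv ℂ h (z' n)‖) atTop (𝓝 ‖fderiv ℂ h 0‖) :=
    (hfd.tendsto.comp hz'0).norm
  have hzn : Tendsto (fun n => ‖z' n‖) atTop (𝓝 0) := by
    simpa using hz'0.norm
  refine ⟨z', hz'0, fun n => hzne (n + N), fun n => (heq _ (hmem n) (hz'B n)).1, ?_, ?_⟩
  · -- gradient condition
    apply squeeze_zero' (Eventually.of_forall fun n => by positivity)
      (g := fun n => ‖A (z' n) / B (z' n)‖ * (‖z' n‖ * ‖fderiv ℂ h (z' n)‖)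
        + ‖h (z' n)‖ * (‖z' n‖ * ‖fderiv ℂ (fun w => A w / B w) (z' n)‖))
    · refine Eventually.of_forall fun n => ?_
      rw [key n]
      calc ‖z' n‖ * ‖(A (z' n) / B (z' n)) • fderiv ℂ h (z' n)
            + h (z' n) • fderiv ℂ (fun w => A w / B w) (z' n)‖
          ≤ ‖z' n‖ * (‖A (z' n) / B (z' n)‖ * ‖fderiv ℂ h (z' n)‖
            + ‖h (z' n)‖ * ‖fderiv ℂ (fun w => A w / B w) (z' n)‖) := by
            refine mul_le_mul_of_nonneg_left ?_ (norm_nonneg _)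
            refine (norm_add_le _ _).trans ?_
            rw [norm_smul, norm_smul]
        _ = _ := by ring
    · have : Tendsto (fun n => ‖A (z' n) / B (z' n)‖ * (‖z' n‖ * ‖fderiv ℂ h (z' n)‖)
          + ‖h (z' n)‖ * (‖z' n‖ * ‖fderiv ℂ (fun w => A w / B w) (z' n)‖)) atTop
          (𝓝 (‖t₀‖ * (0 * ‖fderiv ℂ h 0‖) + ‖(1:ℂ)‖ * 0)) :=
        (hz't.norm.mul (hzn.mul hfdc)).add (hhc.norm.mul hz'd)
      simpa using this
  · -- value condition
    have : Tendsto (fun n => (A (z' n) / B (z' n)) * h (z' n)) atTop (𝓝 (t₀ * 1)) :=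
      hz't.mul hhc
    rw [mul_one] at this
    refine this.congr fun n => ?_
    exact ((heq _ (hmem n) (hz'B n)).2).symm

theorem stmt_9 (f g u' u'' : ℂ × ℂ → ℂ)
    (hf : AnalyticAt ℂ f 0) (hg : AnalyticAt ℂ g 0)
    (hu' : AnalyticAt ℂ u' 0) (hu'' : AnalyticAt ℂ u'' 0)
    (hf0 : f 0 = 0) (hg0 : g 0 = 0) (hu'0 : u' 0 = 0) (hu''0 : u'' 0 = 0)
    (hcop : ∀ p : MvPowerSeries (Fin 2) ℂ, Irreducible p →
      p ∣ taylorSeries f → ¬ p ∣ taylorSeries g)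
    (k l : ℕ) (hk : 0 < k) (hl : 0 < l) (hkl : Nat.Coprime k l) (t₀ : ℂ) :
    AsymptoticCriticalValue (fun z => g z ^ k) (fun z => f z ^ l) t₀ ↔
      AsymptoticCriticalValue (fun z => ((1 + u'' z) * g z) ^ k)
        (fun z => ((1 + u' z) * f z) ^ l) t₀ := by
  have hone : ∀ a : ℂ, ‖a‖ < 1 → 1 + a ≠ 0 := by
    intro a ha hc
    have : a = -1 := by linear_combination hc
    rw [this] at ha
    simp at ha
  have hsmall : ∀ v : ℂ × ℂ → ℂ, AnalyticAt ℂ v 0 → v 0 = 0 →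
      ∀ᶠ w in nhds (0 : ℂ × ℂ), ‖v w‖ < 1 := by
    intro v hv hv0
    have htv : Filter.Tendsto v (nhds 0) (nhds 0) := hv0 ▸ hv.continuousAt
    refine htv.eventually (p := fun y => ‖y‖ < 1) ?_
    filter_upwards [Metric.ball_mem_nhds (0 : ℂ) one_pos] with y hy
    simpa using mem_ball_zero_iff.mp hy
  have hev : ∀ᶠ w in nhds (0 : ℂ × ℂ), AnalyticAt ℂ f w ∧ AnalyticAt ℂ g w ∧
      AnalyticAt ℂ u' w ∧ AnalyticAt ℂ u'' w ∧ ‖u' w‖ < 1 ∧ ‖u'' w‖ < 1 := by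
    filter_upwards [hf.eventually_analyticAt, hg.eventually_analyticAt,
      hu'.eventually_analyticAt, hu''.eventually_analyticAt,
      hsmall u' hu' hu'0, hsmall u'' hu'' hu''0] with w a b c d e e'
    exact ⟨a, b, c, d, e, e'⟩
  obtain ⟨U, hUprop, hUopen, h0U⟩ := eventually_nhds_iff.mp hev
  -- analyticity of the correction factors at 0
  have hne1 : (1 + u' 0) ≠ 0 := by rw [hu'0]; norm_num
  have hne2 : (1 + u'' 0) ≠ 0 := by rw [hu''0]; norm_num
  have han1 : AnalyticAt ℂ (fun w => (1 + u' w) ^ l) 0 := (analyticAt_const.add hu').pow l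
  have han2 : AnalyticAt ℂ (fun w => (1 + u'' w) ^ k) 0 := (analyticAt_const.add hu'').pow k
  constructor
  · intro H
    refine transfer _ _ _ _ (fun w => (1 + u'' w) ^ k / (1 + u' w) ^ l) U hUopen h0U
      ?_ ?_ ?_ ?_ ?_ ?_ t₀ H
    · exact fun w hw => ((hUprop w hw).2.1.differentiableAt).pow k
    · exact fun w hw => ((hUprop w hw).1.differentiableAt).pow l
    · intro w hw
      obtain ⟨-, -, hu'w, hu''w, hs', hs''⟩ := hUprop w hw
      exact diffDiv (((differentiableAt_const _).add hu''w.differentiableAt).pow k)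
        (((differentiableAt_const _).add hu'w.differentiableAt).pow l)
        (pow_ne_zero _ (hone _ hs'))
    · intro w hw hB
      obtain ⟨-, -, -, -, hs', hs''⟩ := hUprop w hw
      have h1 : (1 + u' w) ≠ 0 := hone _ hs'
      have h2 : (1 + u'' w) ≠ 0 := hone _ hs''
      have hfw : f w ≠ 0 := fun h0 => hB (by rw [h0]; exact zero_pow hl.ne')
      refine ⟨pow_ne_zero _ (mul_ne_zero h1 hfw), ?_⟩
      rw [mul_pow, mul_pow]
      field_simp
    · simp [hu'0, hu''0]
    · have : AnalyticAt ℂ (fun w => (1 + u'' w) ^ k / (1 + u' w) ^ l) 0 :=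
        han2.div han1 (pow_ne_zero _ hne1)
      exact this.fderiv.continuousAt
  · intro H
    refine transfer _ _ _ _ (fun w => (1 + u' w) ^ l / (1 + u'' w) ^ k) U hUopen h0U
      ?_ ?_ ?_ ?_ ?_ ?_ t₀ H
    · intro w hw
      obtain ⟨-, hgw, -, hu''w, -, -⟩ := hUprop w hw
      exact (((differentiableAt_const _).add hu''w.differentiableAt).mul
        hgw.differentiableAt).pow k
    · intro w hw
      obtain ⟨hfw, -, hu'w, -, -, -⟩ := hUprop w hw
      exact (((differentiableAt_const _).add hu'w.differentiableAt).mul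
        hfw.differentiableAt).pow l
    · intro w hw
      obtain ⟨-, -, hu'w, hu''w, hs', hs''⟩ := hUprop w hw
      exact diffDiv (((differentiableAt_const _).add hu'w.differentiableAt).pow l)
        (((differentiableAt_const _).add hu''w.differentiableAt).pow k)
        (pow_ne_zero _ (hone _ hs''))
    · intro w hw hB
      obtain ⟨-, -, -, -, hs', hs''⟩ := hUprop w hw
      have h1 : (1 + u' w) ≠ 0 := hone _ hs'
      have h2 : (1 + u'' w) ≠ 0 := hone _ hs''
      have hmul : (1 + u' w) * f w ≠ 0 := fun h0 => hB (by rw [h0]; exact zero_pow hl.ne')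
      have hfw : f w ≠ 0 := right_ne_zero_of_mul hmul
      refine ⟨pow_ne_zero _ hfw, ?_⟩
      rw [mul_pow, mul_pow]
      field_simp
    · simp [hu'0, hu''0]
    · have : AnalyticAt ℂ (fun w => (1 + u' w) ^ l / (1 + u'' w) ^ k) 0 :=
        han1.div han2 (pow_ne_zero _ hne2)
      exact this.fderiv.continuousAt
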